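/- Let q be a prime power and let d, m be integers with 1 ≤ d ≤ m and d ≡ m (mod 2). For g = (g_0, g_1, …, g_{(m−d)/2}) ∈ F_{q^m}^{(m−d)/2 + 1}, define the symmetric F_q-bilinear form S_g on F_{q^m} by S_g(x,y) = Tr_m(g_0·xy) + Σ_{i=1}^{(m−d)/2} Tr_m(g_i·(x·y^{q^i} + x^{q^i}·y)). Then the map g ↦ S_g is injective and, for every g ≠ 0, the form S_g has rank at least d. Consequently Z = {S_g : g ∈ F_{q^m}^{(m−d)/2+1}} is an additive set of symmetric bilinear forms of cardinality q^{m(m−d+2)/2} in which any two distinct elements differ by a form of rank at least d. -/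

import Mathlib

open scoped BigOperators

/-- The rank of a bilinear form, given as a plain function `S : V → V → F`, on a
finite-dimensional `F`-vector space `V`:  `dim V` minus the dimension of the radical
`{x : S x y = 0 for all y}` (a subspace, here realised via its span). -/
noncomputable def funBilinRank (F : Type) [Field F] (V : Type) [AddCommGroup V]
    [Module F V] (S : V → V → F) : ℕ :=
  Module.finrank F V - Module.finrank F (Submodule.span F {x : V | ∀ y, S x y = 0})

/-!
Writing `σ` for the Frobenius `x ↦ x ^ q` of `E/F`, moving `σ ^ i` across the trace gives
`S_g(x, y) = Tr (y * P_g x)` with `P_g x = ∑ g_i σ^i x + ∑_{i ≥ 1} σ^{-i} (g_i) σ^{-i} x`, so by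
nondegeneracy of the trace form the radical of `S_g` is `ker P_g`. With `k = (m - d) / 2`, the map
`σ^k ∘ P_g` is a linearized polynomial with exponents `q^0, …, q^{2k}`, nonzero when `g ≠ 0`; since
all of `ker P_g` are roots, `q ^ dim (ker P_g) ≤ q ^ (2k)`, i.e. the rank is at least `m - 2k = d`.
As `g ↦ S_g` is additive, injectivity and the distance bound follow, and `|Z| = |E| ^ (k + 1)`.
-/

open Polynomial FiniteField Module

theorem Algebra.trace_mul_algEquiv_apply {F E : Type*} [Field F] [Field E] [Algebra F E]
    (τ : Gal(E/F)) (a y : E) : trace F E (a * τ y) = trace F E (τ⁻¹ a * y) := by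
  rw [← trace_eq_of_algEquiv τ (τ⁻¹ a * y), map_mul τ, AlgEquiv.aut_inv,
    AlgEquiv.apply_symm_apply]

theorem Algebra.eq_zero_of_forall_trace_mul_eq_zero {F E : Type*} [Field F] [Field E]
    [Algebra F E] [FiniteDimensional F E] [Algebra.IsSeparable F E] {x : E}
    (h : ∀ y, trace F E (y * x) = 0) : x = 0 :=
  (traceForm_nondegenerate F E).1 x fun y => by rw [traceForm_apply, mul_comm, h]

theorem card_pow_finrank_le_natDegree_of_forall_isRoot (F : Type*) {E : Type*} [Field F]
    [Fintype F] [Field E] [Algebra F E] [Finite E] {V : Submodule F E} {L : E[X]} (hL : L ≠ 0)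
    (hV : ∀ x ∈ V, L.IsRoot x) : Fintype.card F ^ finrank F V ≤ L.natDegree := by
  classical
  have := Fintype.ofFinite E
  calc Fintype.card F ^ finrank F V = (V : Set E).toFinset.card := by
        rw [← Nat.card_eq_fintype_card, ← Module.natCard_eq_pow_finrank,
          ← Nat.card_eq_card_toFinset]
        rfl
    _ ≤ L.natDegree := card_le_degree_of_subset_roots fun x hx =>
        (mem_roots hL).2 (hV x (by simpa using hx))

theorem funBilinRank_zero (F V : Type) [Field F] [AddCommGroup V] [Module F V] :
    funBilinRank F V 0 = 0 := by
  have : {x : V | ∀ y, (0 : V → V → F) x y = 0} = Set.univ :=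
    Set.eq_univ_of_forall fun _ _ => rfl
  rw [funBilinRank, this, Submodule.span_univ, finrank_top, Nat.sub_self]

section Frobenius

variable (F : Type*) {E : Type*} [Field F] [Fintype F] [Field E] [Algebra F E]
  [Algebra.IsAlgebraic F E]

local notation "σ" => frobeniusAlgEquivOfAlgebraic F E

theorem frobeniusAlgEquivOfAlgebraic_pow_apply (n : ℕ) (x : E) :
    (σ ^ n) x = x ^ Fintype.card F ^ n := by
  rw [AlgEquiv.coe_pow, coe_frobeniusAlgEquivOfAlgebraic_iterate]

theorem frobeniusAlgEquivOfAlgebraic_pow_inv_apply {i n : ℕ} (h : i ≤ n) (x : E) :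
    (σ ^ n) ((σ ^ i)⁻¹ x) = (σ ^ (n - i)) x := by
  rw [← AlgEquiv.mul_apply, ← Nat.sub_add_cancel h, pow_add, mul_inv_cancel_right,
    Nat.add_sub_cancel]

end Frobenius

section Code

variable (F : Type*) {E : Type*} [Field F] [Fintype F] [Field E] [Algebra F E] (k : ℕ)

/-- The form `S_g` of the paper, for `g = (g_0, …, g_k)`. -/
noncomputable def codeForm : (Fin (k + 1) → E) →+ (E → E → F) where
  toFun g x y := Algebra.trace F E (g ⟨0, Nat.succ_pos _⟩ * (x * y)) +
    ∑ i ∈ Finset.univ.filter (fun i : Fin (k + 1) => (i : ℕ) ≠ 0),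
      Algebra.trace F E
        (g i * (x * y ^ Fintype.card F ^ (i : ℕ) + x ^ Fintype.card F ^ (i : ℕ) * y))
  map_zero' := by ext; simp
  map_add' g h := by
    ext x y
    simp only [Pi.add_apply, add_mul, map_add, Finset.sum_add_distrib]
    ring

variable [Algebra.IsAlgebraic F E]

local notation "σ" => frobeniusAlgEquivOfAlgebraic F E

noncomputable def codeFormOp (g : Fin (k + 1) → E) : E →ₗ[F] E :=
  ∑ i, g i • (σ ^ (i : ℕ)).toLinearMap +
    ∑ i ∈ Finset.univ.filter (fun i : Fin (k + 1) => (i : ℕ) ≠ 0),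
      (σ ^ (i : ℕ))⁻¹ (g i) • ((σ ^ (i : ℕ))⁻¹).toLinearMap

theorem codeFormOp_apply (g : Fin (k + 1) → E) (x : E) :
    codeFormOp F k g x = ∑ i, g i * (σ ^ (i : ℕ)) x +
      ∑ i ∈ Finset.univ.filter (fun i : Fin (k + 1) => (i : ℕ) ≠ 0),
        (σ ^ (i : ℕ))⁻¹ (g i) * (σ ^ (i : ℕ))⁻¹ x := by
  simp [codeFormOp]

theorem codeForm_apply_eq_trace_mul_codeFormOp (g : Fin (k + 1) → E) (x y : E) :
    codeForm F k g x y = Algebra.trace F E (y * codeFormOp F k g x) := by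
  have hs : Finset.univ.filter (fun i : Fin (k + 1) => (i : ℕ) ≠ 0) =
      Finset.univ.erase ⟨0, Nat.succ_pos _⟩ := by
    ext i
    simp only [Finset.mem_filter, Finset.mem_erase, Finset.mem_univ, true_and, and_true,
      ne_eq, Fin.ext_iff]
  have hadj (i : Fin (k + 1)) :
      Algebra.trace F E (y * ((σ ^ (i : ℕ))⁻¹ (g i) * (σ ^ (i : ℕ))⁻¹ x)) =
        Algebra.trace F E (g i * (x * (σ ^ (i : ℕ)) y)) := by
    rw [← mul_assoc (g i), Algebra.trace_mul_algEquiv_apply, map_mul (σ ^ (i : ℕ))⁻¹,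
      mul_comm y]
  have hcomm : ∀ a b : E, y * (a * b) = a * (b * y) := fun a b => by ring
  rw [codeFormOp_apply, mul_add, Finset.mul_sum, Finset.mul_sum, map_add, map_sum, map_sum,
    Finset.sum_congr rfl fun i _ => hadj i, ← Finset.add_sum_erase _ _ (Finset.mem_univ ⟨0, _⟩),
    ← hs]
  simp only [codeForm, AddMonoidHom.coe_mk, ZeroHom.coe_mk, mul_add, map_add,
    Finset.sum_add_distrib, ← frobeniusAlgEquivOfAlgebraic_pow_apply, hcomm, pow_zero,
    AlgEquiv.one_apply]
  ring

theorem setOf_forall_codeForm_eq_zero [Finite E] (g : Fin (k + 1) → E) :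
    {x | ∀ y, codeForm F k g x y = 0} = LinearMap.ker (codeFormOp F k g) := by
  ext x
  simp only [Set.mem_ofPred_eq, SetLike.mem_coe, LinearMap.mem_ker,
    codeForm_apply_eq_trace_mul_codeFormOp]
  exact ⟨Algebra.eq_zero_of_forall_trace_mul_eq_zero, fun h y => by rw [h, mul_zero, map_zero]⟩

/-- Twisting `codeFormOp` by `σ ^ k` makes all Frobenius exponents nonnegative. -/
noncomputable def codeFormPoly (g : Fin (k + 1) → E) : E[X] :=
  ∑ i, C ((σ ^ k) (g i)) * X ^ Fintype.card F ^ (k + i) +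
    ∑ i ∈ Finset.univ.filter (fun i : Fin (k + 1) => (i : ℕ) ≠ 0),
      C ((σ ^ (k - i)) (g i)) * X ^ Fintype.card F ^ (k - i)

theorem eval_codeFormPoly (g : Fin (k + 1) → E) (x : E) :
    (codeFormPoly F k g).eval x = (σ ^ k) (codeFormOp F k g x) := by
  simp only [codeFormPoly, codeFormOp_apply, eval_add, eval_finsetSum, eval_mul, eval_C,
    eval_pow, eval_X, map_add, map_sum, map_mul]
  congr 1 <;> refine Finset.sum_congr rfl fun i _ => ?_
  · rw [← AlgEquiv.mul_apply (σ ^ k) _ x, ← pow_add,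
      frobeniusAlgEquivOfAlgebraic_pow_apply F _ x]
  · rw [frobeniusAlgEquivOfAlgebraic_pow_inv_apply F i.is_le,
      frobeniusAlgEquivOfAlgebraic_pow_inv_apply F i.is_le,
      frobeniusAlgEquivOfAlgebraic_pow_apply F _ x]

theorem natDegree_codeFormPoly_le (g : Fin (k + 1) → E) :
    (codeFormPoly F k g).natDegree ≤ Fintype.card F ^ (2 * k) := by
  have hle : ∀ {n}, n ≤ 2 * k → ∀ a : E, (C a * X ^ Fintype.card F ^ n).natDegree ≤
      Fintype.card F ^ (2 * k) := fun hn a =>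
    (natDegree_C_mul_X_pow_le _ _).trans (Nat.pow_le_pow_right Fintype.card_pos hn)
  refine (natDegree_add_le _ _).trans (max_le ?_ ?_) <;>
    refine natDegree_sum_le_of_forall_le _ _ fun i _ => hle (by omega) _

theorem coeff_codeFormPoly (g : Fin (k + 1) → E) (j : Fin (k + 1)) :
    (codeFormPoly F k g).coeff (Fintype.card F ^ (k + j)) = (σ ^ k) (g j) := by
  have hinj : ∀ a b, Fintype.card F ^ a = Fintype.card F ^ b ↔ a = b :=
    fun _ _ => Nat.pow_right_inj Fintype.one_lt_card
  simp only [codeFormPoly, coeff_add, finsetSum_coeff, coeff_C_mul_X_pow, hinj]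
  rw [Finset.sum_eq_single j, Finset.sum_eq_zero, add_zero, if_pos rfl]
  · exact fun i hi => if_neg (by have := (Finset.mem_filter.1 hi).2; omega)
  · exact fun i _ hij => if_neg (by simpa [Fin.ext_iff, eq_comm] using hij)
  · simp

theorem finrank_ker_codeFormOp_le [Finite E] {g : Fin (k + 1) → E} (hg : g ≠ 0) :
    finrank F (LinearMap.ker (codeFormOp F k g)) ≤ 2 * k := by
  obtain ⟨j, hj⟩ := Function.ne_iff.1 hg
  have hL : codeFormPoly F k g ≠ 0 := fun h => hj <| EmbeddingLike.map_eq_zero_iff.1 <| by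
    rw [← coeff_codeFormPoly F k g j, h, coeff_zero]
  have hroots := card_pow_finrank_le_natDegree_of_forall_isRoot F hL fun x hx => by
    rw [IsRoot, eval_codeFormPoly, LinearMap.mem_ker.1 hx, map_zero]
  exact (Nat.pow_le_pow_iff_right Fintype.one_lt_card).1
    (hroots.trans (natDegree_codeFormPoly_le F k g))

end Code

section Rank

variable {F E : Type} [Field F] [Fintype F] [Field E] [Algebra F E] [Finite E] {k : ℕ}

theorem funBilinRank_codeForm (g : Fin (k + 1) → E) :
    funBilinRank F E (codeForm F k g) =
      finrank F E - finrank F (LinearMap.ker (codeFormOp F k g)) := by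
  rw [funBilinRank, setOf_forall_codeForm_eq_zero, Submodule.span_eq]

theorem le_funBilinRank_codeForm {d : ℕ} (hd : d + 2 * k = finrank F E)
    {g : Fin (k + 1) → E} (hg : g ≠ 0) : d ≤ funBilinRank F E (codeForm F k g) := by
  have := finrank_ker_codeFormOp_le F k hg
  rw [funBilinRank_codeForm]
  omega

theorem codeForm_injective (hk : 2 * k < finrank F E) :
    Function.Injective (codeForm F k : (Fin (k + 1) → E) →+ (E → E → F)) :=
  (injective_iff_map_eq_zero _).2 fun g hg0 => by
    by_contra hg
    have := le_funBilinRank_codeForm (Nat.sub_add_cancel hk.le) hg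
    rw [hg0, funBilinRank_zero] at this
    omega

theorem ncard_range_codeForm (hk : 2 * k < finrank F E) :
    (Set.range (codeForm F k : (Fin (k + 1) → E) →+ (E → E → F))).ncard =
      Fintype.card F ^ (finrank F E * (k + 1)) := by
  rw [Set.ncard_range_of_injective (codeForm_injective hk), Nat.card_fun,
    Module.natCard_eq_pow_finrank (K := F), Nat.card_eq_fintype_card, Nat.card_fin, ← pow_mul]

end Rank

/-- **Theorem (construction of maximal additive `d`-codes of symmetric bilinear forms).** -/
theorem construction_of_additive_d_codes_of_symmetric_bilinear_forms
    (F E : Type) [Field F] [Fintype F] [Field E] [Fintype E] [Algebra F E]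
    (q : ℕ) (hq : q = Fintype.card F)
    (m d : ℕ) (hd1 : 1 ≤ d) (hdm : d ≤ m) (hpar : d % 2 = m % 2)
    (hdim : Module.finrank F E = m)
    (Φ : (Fin ((m - d) / 2 + 1) → E) → E → E → F)
    (hΦ : ∀ g x y, Φ g x y =
      Algebra.trace F E (g ⟨0, Nat.succ_pos _⟩ * (x * y)) +
        ∑ i ∈ Finset.univ.filter (fun i : Fin ((m - d) / 2 + 1) => (i : ℕ) ≠ 0),
          Algebra.trace F E (g i * (x * y ^ q ^ (i : ℕ) + x ^ q ^ (i : ℕ) * y))) :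
    Function.Injective Φ ∧
    (∀ g, g ≠ 0 → d ≤ funBilinRank F E (Φ g)) ∧
    (∀ S ∈ Set.range Φ, ∀ T ∈ Set.range Φ, S + T ∈ Set.range Φ ∧ -S ∈ Set.range Φ) ∧
    (Set.range Φ).ncard = q ^ (m * (m - d + 2) / 2) ∧
    (∀ S ∈ Set.range Φ, ∀ T ∈ Set.range Φ, S ≠ T → d ≤ funBilinRank F E (S - T)) := by
  subst hq
  have hm : d + 2 * ((m - d) / 2) = finrank F E := by omega
  obtain rfl : Φ = codeForm F ((m - d) / 2) := by
    ext g x y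
    exact hΦ g x y
  have hrank (g : Fin ((m - d) / 2 + 1) → E) (hg : g ≠ 0) :
      d ≤ funBilinRank F E (codeForm F _ g) :=
    le_funBilinRank_codeForm hm hg
  refine ⟨codeForm_injective (by omega), hrank, ?_, ?_, ?_⟩
  · rintro _ ⟨g, rfl⟩ _ ⟨h, rfl⟩
    exact ⟨⟨g + h, map_add _ g h⟩, ⟨-g, map_neg _ g⟩⟩
  · rw [ncard_range_codeForm (by omega), hdim, show m - d + 2 = 2 * ((m - d) / 2 + 1) by omega,
      mul_left_comm, Nat.mul_div_cancel_left _ two_pos]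
  · rintro _ ⟨g, rfl⟩ _ ⟨h, rfl⟩ hne
    rw [← map_sub]
    exact hrank _ (sub_ne_zero.2 fun e => hne (e ▸ rfl))
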